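/- Let q = p^f with f even, f > 2. The number of GL₂(𝔽_p)-orbits on ℙ¹(𝔽_q) \ ℙ¹(𝔽_{p²}) is p(p^{f−2} − 1)/(p² − 1), and every such orbit has cardinality p(p² − 1). -/

import Mathlib

open Matrix Projectivization

/-- The natural action of `GL₂` over a field on the projective line over that field. -/
noncomputable instance glProjAct {K : Type*} [Field K] :
    MulAction (GL (Fin 2) K) (Projectivization K (Fin 2 → K)) where
  smul g x := x.map (Matrix.mulVecLin (g : Matrix (Fin 2) (Fin 2) K))
      (fun v w h => (Matrix.GeneralLinearGroup.toLin g).toLinearEquiv.injective (by simpa using h))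
  one_smul x := by
    induction x using Projectivization.ind with
    | h v hv =>
      show Projectivization.map _ _ _ = _
      erw [Projectivization.map_mk]
      simp [Matrix.mulVecLin_apply]
  mul_smul g h x := by
    induction x using Projectivization.ind with
    | h v hv =>
      show Projectivization.map _ _ _ = Projectivization.map _ _ (Projectivization.map _ _ _)
      erw [Projectivization.map_mk, Projectivization.map_mk]
      simp [Matrix.mulVecLin_apply, Matrix.mulVec_mulVec]

/-- The action of `GL₂(F)` on the projective line over an extension `L` of `F`,
via matrix multiplication on homogeneous coordinates (entries of the matrix being
mapped into `L` by the algebra map). -/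
noncomputable instance glProjActOf {F L : Type*} [Field F] [Field L] [Algebra F L] :
    MulAction (GL (Fin 2) F) (Projectivization L (Fin 2 → L)) :=
  MulAction.compHom _ (Matrix.GeneralLinearGroup.map (n := Fin 2) (algebraMap F L))

/-!
A point of `ℙ¹(𝔽_q)` outside `ℙ¹(𝔽_{p²})` is `[x : 1]` with `x ^ p ^ 2 ≠ x`. If
`g = !![a, b; c, d] ∈ GL₂(𝔽_p)` fixes it then `c x² + (d - a) x - b = 0`, and as `x` satisfies no
nonzero relation of degree `≤ 2` over `𝔽_p`, `g` is scalar. So every orbit in the complement has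
`|GL₂(𝔽_p)| / (p - 1) = p (p² - 1)` points. The complement is `GL₂(𝔽_p)`-stable and, since `2 ∣ f`,
has `q - p²` points, which gives the number of orbits.
-/

open scoped LinearAlgebra.Projectivization

lemma pair_one_ne_zero {L : Type*} [Field L] (x : L) : (![x, 1] : Fin 2 → L) ≠ 0 := by
  intro h
  simpa using congrFun h 1

/-- For `L = 𝔽_{p^f}` and `q = p²` this is `ℙ¹(𝔽_{p²})`. -/
def fixedProjLine (L : Type*) [Field L] (q : ℕ) : Set (ℙ L (Fin 2 → L)) :=
  {P | ∃ (a b : L) (h : (![a, b] : Fin 2 → L) ≠ 0), a ^ q = a ∧ b ^ q = b ∧ P = mk L ![a, b] h}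

section ProjLine

variable {L : Type*} [Field L]

lemma mk_pair_one_eq_mk_iff {x a b : L} (h : (![a, b] : Fin 2 → L) ≠ 0) :
    mk L ![x, 1] (pair_one_ne_zero x) = mk L ![a, b] h ↔ b ≠ 0 ∧ x = a / b := by
  rw [mk_eq_mk_iff]
  constructor
  · rintro ⟨t, ht⟩
    have h0 := congrFun ht 0
    have h1 := congrFun ht 1
    simp only [Pi.smul_apply, Matrix.cons_val_zero, Matrix.cons_val_one, Units.smul_def,
      smul_eq_mul] at h0 h1
    have hb : b ≠ 0 := right_ne_zero_of_mul_eq_one h1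
    refine ⟨hb, ?_⟩
    rw [eq_div_iff hb, ← h0]
    linear_combination a * h1
  · rintro ⟨hb, rfl⟩
    refine ⟨Units.mk0 b⁻¹ (inv_ne_zero hb), ?_⟩
    ext i
    fin_cases i <;> simp [hb, div_eq_inv_mul]

lemma mk_pair_one_injective :
    Function.Injective (fun x : L => mk L ![x, 1] (pair_one_ne_zero x)) := by
  intro x y hxy
  simpa using ((mk_pair_one_eq_mk_iff (pair_one_ne_zero y)).1 hxy).2

lemma mk_pair_one_mem_fixedProjLine_iff (x : L) (q : ℕ) :
    mk L ![x, 1] (pair_one_ne_zero x) ∈ fixedProjLine L q ↔ x ^ q = x := by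
  constructor
  · rintro ⟨a, b, h, ha, hb, hP⟩
    obtain ⟨-, rfl⟩ := (mk_pair_one_eq_mk_iff h).1 hP
    rw [div_pow, ha, hb]
  · intro hx
    exact ⟨x, 1, pair_one_ne_zero x, hx, one_pow q, rfl⟩

lemma exists_eq_mk_pair_one_of_notMem_fixedProjLine {q : ℕ} (hq : q ≠ 0)
    {P : ℙ L (Fin 2 → L)} (hP : P ∉ fixedProjLine L q) :
    ∃ x : L, x ^ q ≠ x ∧ P = mk L ![x, 1] (pair_one_ne_zero x) := by
  induction P using Projectivization.ind with
  | h v hv =>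
    have hv1 : v 1 ≠ 0 := by
      intro hv1
      have hv0 : v 0 ≠ 0 := fun hv0 => hv (by ext i; fin_cases i <;> assumption)
      refine hP ⟨1, 0, by simp, one_pow q, zero_pow hq, ?_⟩
      rw [mk_eq_mk_iff]
      refine ⟨Units.mk0 (v 0) hv0, ?_⟩
      ext i
      fin_cases i <;> simp [hv1]
    have hv_eq : mk L v hv = mk L ![v 0 / v 1, 1] (pair_one_ne_zero _) := by
      rw [mk_eq_mk_iff]
      refine ⟨Units.mk0 (v 1) hv1, ?_⟩
      ext i
      fin_cases i <;> simp [mul_div_cancel₀ _ hv1]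
    refine ⟨v 0 / v 1, fun hx => hP ?_, hv_eq⟩
    rw [hv_eq, mk_pair_one_mem_fixedProjLine_iff]
    exact hx

lemma card_compl_fixedProjLine {q : ℕ} (hq : q ≠ 0) :
    Nat.card ↥(fixedProjLine L q)ᶜ = Nat.card {x : L // x ^ q ≠ x} := by
  refine (Nat.card_congr (Equiv.ofBijective
    (fun x => ⟨mk L ![x.1, 1] (pair_one_ne_zero x.1),
      (mk_pair_one_mem_fixedProjLine_iff x.1 q).not.2 x.2⟩) ⟨?_, ?_⟩)).symm
  · intro x y hxy
    exact Subtype.ext (mk_pair_one_injective (congrArg Subtype.val hxy))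
  · rintro ⟨P, hP⟩
    obtain ⟨x, hx, rfl⟩ := exists_eq_mk_pair_one_of_notMem_fixedProjLine hq hP
    exact ⟨⟨x, hx⟩, rfl⟩

end ProjLine

section Frobenius

variable {p : ℕ} [Fact p.Prime] {L : Type*} [Field L] [CharP L p]

/-- Subtracting the relation from its Frobenius image leaves `a * (x ^ p + x) + b = 0`
(as `x ^ p ≠ x`); doing it once more leaves `a * (x ^ p ^ 2 - x) = 0`. -/
lemma quadratic_coeffs_eq_zero {x : L} (hx : x ^ p ^ 2 ≠ x) {a b c : L}
    (ha : a ^ p = a) (hb : b ^ p = b) (hc : c ^ p = c) (h : a * x ^ 2 + b * x + c = 0) :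
    a = 0 ∧ b = 0 ∧ c = 0 := by
  have hxp : x ^ p ≠ x := fun h' => hx (by rw [pow_two, pow_mul, h', h'])
  have h' : a * (x ^ p) ^ 2 + b * x ^ p + c = 0 := by
    have := congrArg (frobenius L p) h
    simpa only [map_add, map_mul, map_pow, frobenius_def, map_zero, ha, hb, hc] using this
  have hlin : a * (x ^ p + x) + b = 0 := by
    have : (x ^ p - x) * (a * (x ^ p + x) + b) = 0 := by linear_combination h' - h
    exact (mul_eq_zero.1 this).resolve_left (sub_ne_zero.2 hxp)
  have hlin' : a * (x ^ p ^ 2 + x ^ p) + b = 0 := by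
    have := congrArg (frobenius L p) hlin
    simpa only [map_add, map_mul, map_pow, frobenius_def, map_zero, ha, hb, ← pow_mul,
      ← pow_two] using this
  have ha0 : a = 0 := by
    have : a * (x ^ p ^ 2 - x) = 0 := by linear_combination hlin' - hlin
    exact (mul_eq_zero.1 this).resolve_right (sub_ne_zero.2 hx)
  subst ha0
  have hb0 : b = 0 := by simpa using hlin
  subst hb0
  simpa using h

end Frobenius

section Action

variable {p : ℕ} [Fact p.Prime] {L : Type*} [Field L] [Algebra (ZMod p) L]

lemma smul_mk_eq_mk_mulVec (g : GL (Fin 2) (ZMod p)) (v : Fin 2 → L) (hv : v ≠ 0) :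
    g • mk L v hv = mk L ((g : Matrix (Fin 2) (Fin 2) (ZMod p)).map (algebraMap (ZMod p) L) *ᵥ v)
      (fun h => hv ((Matrix.GeneralLinearGroup.toLin
        (Matrix.GeneralLinearGroup.map (algebraMap (ZMod p) L) g)).toLinearEquiv.map_eq_zero_iff.1
          (by simpa using h))) :=
  rfl

lemma algebraMap_zmod_pow_pow (z : ZMod p) (k : ℕ) :
    algebraMap (ZMod p) L z ^ p ^ k = algebraMap (ZMod p) L z := by
  rw [← map_pow, ZMod.pow_card_pow]

variable [CharP L p]

lemma smul_mem_fixedProjLine (k : ℕ) (g : GL (Fin 2) (ZMod p)) {P : ℙ L (Fin 2 → L)}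
    (hP : P ∈ fixedProjLine L (p ^ k)) : g • P ∈ fixedProjLine L (p ^ k) := by
  obtain ⟨a, b, hab, ha, hb, rfl⟩ := hP
  set M := (g : Matrix (Fin 2) (Fin 2) (ZMod p)).map (algebraMap (ZMod p) L)
  have hfix (i : Fin 2) : (M i 0 * a + M i 1 * b) ^ p ^ k = M i 0 * a + M i 1 * b := by
    simp only [M, add_pow_char_pow, mul_pow, Matrix.map_apply, algebraMap_zmod_pow_pow, ha, hb]
  have hMv : M *ᵥ ![a, b] = ![M 0 0 * a + M 0 1 * b, M 1 0 * a + M 1 1 * b] := by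
    ext i; fin_cases i <;> simp [Matrix.mulVec, dotProduct, Fin.sum_univ_two]
  rw [smul_mk_eq_mk_mulVec]
  generalize_proofs hne
  exact ⟨_, _, hMv ▸ hne, hfix 0, hfix 1, (mk_eq_mk_iff _ _ _ _ _).2 ⟨1, by rw [one_smul, hMv]⟩⟩

end Action

section Stabilizer

variable {p : ℕ} [Fact p.Prime] {L : Type*} [Field L] [Algebra (ZMod p) L] [CharP L p]

lemma stabilizer_mk_pair_one_eq_center {x : L} (hx : x ^ p ^ 2 ≠ x) :
    MulAction.stabilizer (GL (Fin 2) (ZMod p)) (mk L ![x, 1] (pair_one_ne_zero x)) =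
      Subgroup.center (GL (Fin 2) (ZMod p)) := by
  ext g
  rw [MulAction.mem_stabilizer_iff, smul_mk_eq_mk_mulVec, mk_eq_mk_iff]
  set ι := algebraMap (ZMod p) L
  have hι (z : ZMod p) : ι z ^ p = ι z := by simpa using algebraMap_zmod_pow_pow z 1
  constructor
  · rintro ⟨t, ht⟩
    have h0 := congrFun ht 0
    have h1 := congrFun ht 1
    simp only [Matrix.mulVec, dotProduct, Fin.sum_univ_two, Matrix.map_apply, Pi.smul_apply,
      Units.smul_def, smul_eq_mul, Matrix.cons_val_zero, Matrix.cons_val_one, mul_one] at h0 h1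
    obtain ⟨h10, h11, h01⟩ := quadratic_coeffs_eq_zero hx (hι (g 1 0)) (hι (g 1 1 - g 0 0))
      (hι (-g 0 1)) (by simp only [map_sub, map_neg]; linear_combination h0 - x * h1)
    simp only [map_eq_zero_iff ι ι.injective, sub_eq_zero, neg_eq_zero] at h10 h11 h01
    rw [Matrix.GeneralLinearGroup.mem_center_iff_val_mem_range_scalar]
    refine ⟨g 0 0, ?_⟩
    ext i j
    fin_cases i <;> fin_cases j <;> simp [h10, h11, h01]
  · intro hg
    rw [Matrix.GeneralLinearGroup.center_eq_range_scalar] at hg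
    obtain ⟨u, rfl⟩ := hg
    refine ⟨Units.map ι u, ?_⟩
    ext i
    fin_cases i <;> simp [Matrix.mulVec, dotProduct, Fin.sum_univ_two, Units.smul_def]

end Stabilizer

lemma card_center_GL {n R : Type*} [Fintype n] [DecidableEq n] [Nonempty n] [CommRing R] :
    Nat.card (Subgroup.center (GL n R)) = Nat.card Rˣ := by
  rw [Matrix.GeneralLinearGroup.center_eq_range_scalar]
  refine Nat.card_range_of_injective (f := Matrix.GeneralLinearGroup.scalar (R := R) n)
    fun u v huv => Units.ext ?_
  obtain ⟨i⟩ := ‹Nonempty n›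
  simpa using congrArg (fun g : GL n R => (g : Matrix n n R) i i) huv

lemma card_orbit_mk_pair_one {p : ℕ} [Fact p.Prime] {L : Type*} [Field L] [Algebra (ZMod p) L]
    [CharP L p] {x : L} (hx : x ^ p ^ 2 ≠ x) :
    Nat.card (MulAction.orbit (GL (Fin 2) (ZMod p)) (mk L ![x, 1] (pair_one_ne_zero x))) =
      p * (p ^ 2 - 1) := by
  have hp : p.Prime := Fact.out
  have orbit_stabilizer := (MulAction.stabilizer (GL (Fin 2) (ZMod p))
    (mk L ![x, 1] (pair_one_ne_zero x))).index_mul_card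
  rw [MulAction.index_stabilizer, ← Nat.card_coe_set_eq, stabilizer_mk_pair_one_eq_center hx,
    card_center_GL, Nat.card_eq_fintype_card (α := (ZMod p)ˣ), ZMod.card_units,
    Matrix.card_GL_field, ZMod.card, Fin.prod_univ_two, Fin.val_zero, Fin.val_one, pow_zero,
    pow_one] at orbit_stabilizer
  apply Nat.eq_of_mul_eq_mul_right (Nat.sub_pos_of_lt hp.one_lt)
  rw [orbit_stabilizer, show p ^ 2 - p = p * (p - 1) by rw [Nat.mul_sub_one, sq]]
  ring

lemma card_orbits_mul_eq_card {G α : Type*} [Group G] [MulAction G α] [Finite α] {s : Set α}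
    (hs : ∀ g : G, ∀ x ∈ s, g • x ∈ s) {k : ℕ}
    (hk : ∀ x ∈ s, Nat.card (MulAction.orbit G x) = k) :
    Nat.card {O : Set α | ∃ x, x ∈ s ∧ O = MulAction.orbit G x} * k = Nat.card s := by
  classical
  have := Fintype.ofFinite α
  set 𝒪 := {O : Set α | ∃ x, x ∈ s ∧ O = MulAction.orbit G x}
  have card_fiber (O : Set α) (hO : O ∈ 𝒪.toFinset) :
      (s.toFinset.filter (MulAction.orbit G · = O)).card = k := by
    obtain ⟨y, hy, rfl⟩ := Set.mem_toFinset.1 hO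
    rw [← hk y hy, Nat.card_eq_card_toFinset]
    congr 1
    ext x
    simp only [Finset.mem_filter, Set.mem_toFinset]
    constructor
    · rintro ⟨-, hx⟩
      exact hx ▸ MulAction.mem_orbit_self x
    · rintro ⟨g, rfl⟩
      exact ⟨hs g y hy, MulAction.orbit_smul g y⟩
  rw [Nat.card_eq_card_toFinset, Nat.card_eq_card_toFinset s,
    Finset.card_eq_sum_card_fiberwise (f := MulAction.orbit G) (t := 𝒪.toFinset)
      fun x hx => Set.mem_toFinset.2 ⟨x, Set.mem_toFinset.1 hx, rfl⟩,
    Finset.sum_congr rfl card_fiber, Finset.sum_const, smul_eq_mul]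

section FixedPoints

open Polynomial

variable {p : ℕ} [Fact p.Prime] {L : Type*} [Field L] [Finite L] [Algebra (ZMod p) L] {k f : ℕ}

/-- The fixed points of `x ↦ x ^ p ^ k` are the roots of the separable polynomial
`X ^ p ^ k - X`, which divides `X ^ p ^ f - X` and hence splits in `L`. -/
lemma card_pow_pow_eq_self (hL : Nat.card L = p ^ f) (hk : k ∣ f) (hk0 : k ≠ 0) :
    Nat.card {x : L // x ^ p ^ k = x} = p ^ k := by
  have hp : p.Prime := Fact.out
  have hP : (X ^ p ^ k - X : (ZMod p)[X]) ≠ 0 :=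
    FiniteField.X_pow_card_pow_sub_X_ne_zero _ hk0 hp.one_lt
  have hsplit : Splits ((X ^ p ^ k - X : (ZMod p)[X]).map (algebraMap (ZMod p) L)) := by
    refine (FiniteField.splits_X_pow_nat_card_sub_X p).of_dvd ?_ ?_
    · exact map_ne_zero (FiniteField.X_pow_card_sub_X_ne_zero _ Finite.one_lt_card)
    · rw [hL]
      exact (map_dvd_map' _).2 (dvd_pow_pow_sub_self_of_dvd hk)
  have hroots := card_rootSet_eq_natDegree (galois_poly_separable p _ (dvd_pow_self p hk0)) hsplit
  rw [FiniteField.X_pow_card_pow_sub_X_natDegree_eq _ hk0 hp.one_lt,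
    ← Nat.card_eq_fintype_card] at hroots
  refine (Nat.card_congr (Equiv.subtypeEquivRight fun x => ?_)).trans hroots
  simp [mem_rootSet, hP, sub_eq_zero]

lemma card_pow_pow_ne_self (hL : Nat.card L = p ^ f) (hk : k ∣ f) (hk0 : k ≠ 0) :
    Nat.card {x : L // x ^ p ^ k ≠ x} = p ^ f - p ^ k := by
  classical
  have := Fintype.ofFinite L
  calc Nat.card {x : L // x ^ p ^ k ≠ x} = Nat.card L - Nat.card {x : L // x ^ p ^ k = x} := by
        simp only [Nat.card_eq_fintype_card]
        convert Fintype.card_subtype_compl (fun x : L => x ^ p ^ k = x)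
    _ = p ^ f - p ^ k := by rw [hL, card_pow_pow_eq_self hL hk hk0]

end FixedPoints

/-- Let `q = p^f` with `f` even, `f > 2`.  Every `GL₂(𝔽_p)`-orbit on
`ℙ¹(𝔽_q) \ ℙ¹(𝔽_{p²})` has cardinality `p(p² − 1)`, and the number of such orbits is
`p(p^(f−2) − 1)/(p² − 1)` (stated multiplicatively to avoid division).  A point of
`ℙ¹(𝔽_q)` lies in `ℙ¹(𝔽_{p²})` iff it has homogeneous coordinates fixed by the square
of Frobenius. -/
theorem orbit_count_complement_P1Fp2 (p f : ℕ) [Fact p.Prime] (hf1 : Even f) (hf2 : 2 < f) :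
    (∀ P : Projectivization (GaloisField p f) (Fin 2 → GaloisField p f),
      (¬ ∃ (a b : GaloisField p f) (h : (![a, b] : Fin 2 → GaloisField p f) ≠ 0),
          a ^ p ^ 2 = a ∧ b ^ p ^ 2 = b ∧ P = Projectivization.mk (GaloisField p f) ![a, b] h) →
      Nat.card (MulAction.orbit (GL (Fin 2) (ZMod p)) P) = p * (p ^ 2 - 1)) ∧
    Nat.card {O : Set (Projectivization (GaloisField p f) (Fin 2 → GaloisField p f)) |
        ∃ P : Projectivization (GaloisField p f) (Fin 2 → GaloisField p f),
          (¬ ∃ (a b : GaloisField p f) (h : (![a, b] : Fin 2 → GaloisField p f) ≠ 0),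
              a ^ p ^ 2 = a ∧ b ^ p ^ 2 = b ∧
              P = Projectivization.mk (GaloisField p f) ![a, b] h) ∧
          O = MulAction.orbit (GL (Fin 2) (ZMod p)) P}
      * (p ^ 2 - 1) = p * (p ^ (f - 2) - 1) := by
  have hp : p.Prime := Fact.out
  have hq : p ^ 2 ≠ 0 := pow_ne_zero 2 hp.ne_zero
  have card_orbit : ∀ P ∉ fixedProjLine (GaloisField p f) (p ^ 2),
      Nat.card (MulAction.orbit (GL (Fin 2) (ZMod p)) P) = p * (p ^ 2 - 1) := by
    intro P hP
    obtain ⟨x, hx, rfl⟩ := exists_eq_mk_pair_one_of_notMem_fixedProjLine hq hP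
    exact card_orbit_mk_pair_one hx
  refine ⟨card_orbit, ?_⟩
  change Nat.card {O | ∃ P, P ∈ (fixedProjLine (GaloisField p f) (p ^ 2))ᶜ ∧
    O = MulAction.orbit (GL (Fin 2) (ZMod p)) P} * (p ^ 2 - 1) = _
  have count := card_orbits_mul_eq_card (s := (fixedProjLine (GaloisField p f) (p ^ 2))ᶜ)
    (fun g P hP hgP => hP (by simpa only [inv_smul_smul] using smul_mem_fixedProjLine 2 g⁻¹ hgP)) card_orbit
  rw [card_compl_fixedProjLine hq, card_pow_pow_ne_self (GaloisField.card p f (by omega))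
    (even_iff_two_dvd.1 hf1) two_ne_zero] at count
  have hpf : p ^ f - p ^ 2 = p ^ 2 * (p ^ (f - 2) - 1) := by
    rw [Nat.mul_sub_one, ← pow_add, Nat.add_sub_cancel' hf2.le]
  apply Nat.eq_of_mul_eq_mul_right hp.pos
  linear_combination count + hpf
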